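/- arXiv:1802.01238 — 6 statements merged into one kernel-verified Lean document; each statement's English description precedes it below -/
import Mathlib

section
/- The two one-dimensional simplicial complexes G generated by edges {1,2},{1,3},{2,6},{2,7},{6,8},{7,4},{4,5} and H generated by edges {1,2},{1,5},{1,7},{2,8},{5,6},{8,6},{3,4} have connection matrices with the same characteristic polynomial, but G is connected (b0 = 1) while H has two connected components (b0 = 2). -/
/-!
The two connection matrices are similar over `ℚ`: an explicit integer matrix `P` satisfies
`L_G P = P L_H`, and `P Q = 744 • 1` for an explicit integer matrix `Q`, so `det P ≠ 0`.
Both identities are finite integer computations, and so are the statements about `b0`.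
-/

open Matrix Polynomial Finset

namespace Matrix

variable {n R : Type*} [Fintype n] [DecidableEq n] [CommRing R]

theorem det_ne_zero_of_mul_eq_smul_one [IsDomain R] {P Q : Matrix n n R} {c : R} (hc : c ≠ 0)
    (hPQ : P * Q = c • 1) : P.det ≠ 0 := by
  intro hP
  have hdet := congrArg det hPQ
  rw [det_mul, det_smul, det_one, hP, zero_mul, mul_one] at hdet
  exact pow_ne_zero _ hc hdet.symm

theorem charmatrix_mul_map_C_of_mul_eq_mul {A B P : Matrix n n R} (h : A * P = P * B) :
    charmatrix A * P.map C = P.map C * charmatrix B := by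
  simp only [charmatrix, RingHom.mapMatrix_apply, sub_mul, mul_sub, ← Matrix.map_mul, h]
  rw [(scalar_commute (X : R[X]) (fun _ => Commute.all _ _) _).eq]

theorem charpoly_eq_of_mul_eq_mul [IsDomain R] {A B P : Matrix n n R} (h : A * P = P * B)
    (hP : P.det ≠ 0) : A.charpoly = B.charpoly := by
  have hdet := congrArg det (charmatrix_mul_map_C_of_mul_eq_mul h)
  rw [det_mul, det_mul, ← RingHom.mapMatrix_apply, ← RingHom.map_det, mul_comm] at hdet
  exact mul_left_cancel₀ (C_ne_zero.mpr hP) hdet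

end Matrix

section ConnectionMatrix

variable {ι α R : Type*} [DecidableEq α]

def connectionMatrix [Zero R] [One R] (v : ι → Finset α) : Matrix ι ι R :=
  Matrix.of fun i j => if (v i ∩ v j).Nonempty then 1 else 0

theorem connectionMatrix_map {S : Type*} [NonAssocSemiring R] [NonAssocSemiring S] (f : R →+* S)
    (v : ι → Finset α) : (connectionMatrix v : Matrix ι ι R).map f = connectionMatrix v := by
  ext i j
  simp only [connectionMatrix, map_apply, of_apply, apply_ite f, map_one, map_zero]

theorem charpoly_eq_connectionMatrix [Fintype ι] [DecidableEq ι] [CommRing R] {v : ι → Finset α}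
    (hv : Function.Injective v) {s : Finset (Finset α)} (hs : univ.image v = s)
    {L : Matrix s s R} (hL : ∀ x y, L x y = if ((x : Finset α) ∩ y).Nonempty then 1 else 0) :
    L.charpoly = (connectionMatrix v).charpoly := by
  have mem : ∀ i, v i ∈ s := fun i => hs ▸ mem_image_of_mem v (mem_univ i)
  let e : ι ≃ s := Equiv.ofBijective (fun i => ⟨v i, mem i⟩)
    ⟨fun i j h => hv (congrArg Subtype.val h), fun ⟨x, hx⟩ => by
      obtain ⟨i, -, rfl⟩ := mem_image.mp (hs ▸ hx); exact ⟨i, rfl⟩⟩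
  rw [← charpoly_reindex e.symm]
  congr 1
  ext i j
  exact hL (e i) (e j)

end ConnectionMatrix

section EdgeGraph

variable {α : Type*} [DecidableEq α]

def edgeGraph (E : Finset (Finset α)) : SimpleGraph α where
  Adj u v := u ≠ v ∧ {u, v} ∈ E
  symm := ⟨fun u v h => ⟨h.1.symm, pair_comm u v ▸ h.2⟩⟩
  loopless := ⟨fun _ h => h.1 rfl⟩

instance (E : Finset (Finset α)) : DecidableRel (edgeGraph E).Adj :=
  fun u v => inferInstanceAs (Decidable (u ≠ v ∧ {u, v} ∈ E))

theorem SimpleGraph.eq_edgeGraph {G : SimpleGraph α} {E : Finset (Finset α)}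
    (h : ∀ u v, G.Adj u v ↔ {u, v} ∈ E) : G = edgeGraph E := by
  ext u v
  exact ⟨fun huv => ⟨huv.ne, (h u v).mp huv⟩, fun huv => (h u v).mpr huv.2⟩

end EdgeGraph

namespace IsospectralPair

def edgesG : Finset (Finset (Fin 8)) := {{0,1},{0,2},{1,5},{1,6},{5,7},{6,3},{3,4}}

def edgesH : Finset (Finset (Fin 8)) := {{0,1},{0,4},{0,6},{1,7},{4,5},{7,5},{2,3}}

def simplicesG : Fin 15 → Finset (Fin 8) :=
  ![{0},{1},{2},{3},{4},{5},{6},{7},{0,1},{0,2},{1,5},{1,6},{5,7},{6,3},{3,4}]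

def simplicesH : Fin 15 → Finset (Fin 8) :=
  ![{0},{1},{2},{3},{4},{5},{6},{7},{0,1},{0,4},{0,6},{1,7},{4,5},{7,5},{2,3}]

theorem simplicesG_injective : Function.Injective simplicesG := by decide

theorem simplicesH_injective : Function.Injective simplicesH := by decide

theorem image_simplicesG : univ.image simplicesG = univ.image (fun v => {v}) ∪ edgesG := by
  decide

theorem image_simplicesH : univ.image simplicesH = univ.image (fun v => {v}) ∪ edgesH := by
  decide

def intertwiner : Matrix (Fin 15) (Fin 15) ℤ :=
  !![0, -1, -1, 2, -1, -1, -1, 0, 0, 0, 0, 1, -1, 0, 0;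
  -2, -1, 1, -2, -1, -1, 0, -1, 0, 0, 0, 0, 0, 0, 0;
  -1, 1, 2, -1, 0, 0, 1, -1, 1, -1, 0, 0, 0, 0, 0;
  0, -1, 2, -1, -1, 1, -2, 1, 0, 0, 0, 0, 0, 0, 0;
  -2, 1, -1, 2, 1, 0, 2, 0, 0, 0, 0, 0, 0, 0, 0;
  0, -1, -1, 2, -1, 0, -1, -1, 0, 0, 0, -1, 1, 0, 0;
  -2, 0, -2, 1, 0, 0, 0, 0, 0, 0, 0, 0, 0, 0, 0;
  -1, 0, 2, -1, 1, -1, 1, 0, -1, 1, 0, 0, 0, 0, 0;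
  0, 0, 0, 0, 0, -1, 0, 1, 1, -2, -1, -2, -1, 0, 0;
  0, 1, 0, 0, -1, 0, 0, 0, -1, 0, 0, 1, -1, -1, 1;
  0, 0, 0, 0, 0, 1, 0, -1, -2, 1, -1, -1, -2, 0, 0;
  0, 0, 0, 0, 0, 0, 0, 0, -2, -2, 0, 1, 1, -2, -1;
  0, -1, 0, 0, 1, 0, 0, 0, 0, -1, 0, -1, 1, -1, 1;
  0, 0, 0, 0, 0, 0, 0, 0, 0, 0, -2, -1, -1, 2, 0;
  0, 0, 0, 0, 0, 0, 0, 0, -1, -1, 0, 1, 1, 0, 1]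

-- `744 • intertwiner⁻¹`
def intertwinerScaledInv : Matrix (Fin 15) (Fin 15) ℤ :=
  !![0, 0, -93, -93, 0, 0, -279, -93, 0, 0, 0, 0, 0, 0, 0;
  -156, -372, 267, -93, -372, 156, 465, 291, 72, 192, -72, 0, -192, 0, 0;
  62, -62, 124, 124, 62, 62, -124, 124, 0, 0, 0, 0, 0, 0, 0;
  124, -124, 62, 62, 124, 124, -62, 62, 0, 0, 0, 0, 0, 0, 0;
  156, -372, 291, -93, -372, -156, 465, 267, -72, -192, 72, 0, 192, 0, 0;
  -81, 93, -42, 186, 279, -105, -186, -330, -120, -72, 120, 0, 72, 0, 0;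
  -93, 465, -372, 0, 651, -93, -744, -372, 0, 0, 0, 0, 0, 0, 0;
  -105, 93, -330, 186, 279, -81, -186, -42, 120, 72, -120, 0, -72, 0, 0;
  72, 0, 120, 0, 0, -72, 0, -120, -162, 126, -210, 0, 246, 186, -372;
  -72, 0, -120, 0, 0, 72, 0, 120, -210, 246, -162, 0, 126, 186, -372;
  0, 0, 0, 0, 0, 0, 0, 0, 372, -465, 372, -279, -465, -744, 651;
  192, 0, 72, 0, 0, -192, 0, -72, -246, 57, -126, 93, 129, 186, -93;
  -192, 0, -72, 0, 0, 192, 0, 72, -126, 129, -246, 93, 57, 186, -93;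
  0, 0, 0, 0, 0, 0, 0, 0, 186, -372, 186, -186, -372, -186, 558;
  0, 0, 0, 0, 0, 0, 0, 0, 0, 186, 0, -186, 186, 0, 186]

theorem connectionMatrix_mul_intertwiner :
    connectionMatrix simplicesG * intertwiner = intertwiner * connectionMatrix simplicesH := by
  decide

theorem intertwiner_mul_scaledInv : intertwiner * intertwinerScaledInv = (744 : ℤ) • 1 := by
  decide

theorem charpoly_connectionMatrix_eq :
    (connectionMatrix simplicesG : Matrix (Fin 15) (Fin 15) ℤ).charpoly =
      (connectionMatrix simplicesH).charpoly :=
  charpoly_eq_of_mul_eq_mul connectionMatrix_mul_intertwiner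
    (det_ne_zero_of_mul_eq_smul_one (by norm_num) intertwiner_mul_scaledInv)

theorem edgeGraph_edgesG_connected : (edgeGraph edgesG).Connected := by
  decide +kernel

theorem card_connectedComponent_edgeGraph_edgesH :
    Nat.card (edgeGraph edgesH).ConnectedComponent = 2 := by
  rw [Nat.card_eq_fintype_card]
  decide +kernel

end IsospectralPair

open IsospectralPair in
theorem connection_isospectral_different_b0_general
    (GE HE : Finset (Finset (Fin 8)))
    (hGE : GE = {{0,1},{0,2},{1,5},{1,6},{5,7},{6,3},{3,4}})
    (hHE : HE = {{0,1},{0,4},{0,6},{1,7},{4,5},{7,5},{2,3}})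
    (GC HC : Finset (Finset (Fin 8)))
    (hGC : GC = (Finset.univ.image (fun v => ({v} : Finset (Fin 8)))) ∪ GE)
    (hHC : HC = (Finset.univ.image (fun v => ({v} : Finset (Fin 8)))) ∪ HE)
    (LG : Matrix {x // x ∈ GC} {x // x ∈ GC} ℚ)
    (LH : Matrix {x // x ∈ HC} {x // x ∈ HC} ℚ)
    (hLG : ∀ x y, LG x y = if ((x : Finset (Fin 8)) ∩ (y : Finset (Fin 8))).Nonempty then 1 else 0)
    (hLH : ∀ x y, LH x y = if ((x : Finset (Fin 8)) ∩ (y : Finset (Fin 8))).Nonempty then 1 else 0)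
    (g1 g2 : SimpleGraph (Fin 8)) [DecidableRel g2.Adj]
    (hg1 : ∀ u v, g1.Adj u v ↔ ({u, v} : Finset (Fin 8)) ∈ GE)
    (hg2 : ∀ u v, g2.Adj u v ↔ ({u, v} : Finset (Fin 8)) ∈ HE) :
    LG.charpoly = LH.charpoly ∧
    g1.Connected ∧
    Fintype.card g2.ConnectedComponent = 2 := by
  subst hGE hHE
  refine ⟨?_, ?_, ?_⟩
  · rw [charpoly_eq_connectionMatrix simplicesG_injective (image_simplicesG.trans hGC.symm) hLG,
      charpoly_eq_connectionMatrix simplicesH_injective (image_simplicesH.trans hHC.symm) hLH,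
      ← connectionMatrix_map (Int.castRingHom ℚ), ← connectionMatrix_map (Int.castRingHom ℚ),
      charpoly_map, charpoly_map, charpoly_connectionMatrix_eq]
  · rw [SimpleGraph.eq_edgeGraph hg1]
    exact edgeGraph_edgesG_connected
  · rw [← Nat.card_eq_fintype_card, SimpleGraph.eq_edgeGraph hg2]
    exact card_connectedComponent_edgeGraph_edgesH

/-- The two one-dimensional simplicial complexes generated by the edge sets
`{1,2},{1,3},{2,6},{2,7},{6,8},{7,4},{4,5}` and
`{1,2},{1,5},{1,7},{2,8},{5,6},{8,6},{3,4}` (here written with vertices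
`0,…,7` instead of `1,…,8`) have connection matrices with the same
characteristic polynomial, but the first is connected (`b0 = 1`) while the
second has two connected components (`b0 = 2`). -/
theorem connection_isospectral_different_b0
    (GE HE : Finset (Finset (Fin 8)))
    (hGE : GE = {{0,1},{0,2},{1,5},{1,6},{5,7},{6,3},{3,4}})
    (hHE : HE = {{0,1},{0,4},{0,6},{1,7},{4,5},{7,5},{2,3}})
    (GC HC : Finset (Finset (Fin 8)))
    (hGC : GC = (Finset.univ.image (fun v => ({v} : Finset (Fin 8)))) ∪ GE)
    (hHC : HC = (Finset.univ.image (fun v => ({v} : Finset (Fin 8)))) ∪ HE)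
    (LG : Matrix {x // x ∈ GC} {x // x ∈ GC} ℚ)
    (LH : Matrix {x // x ∈ HC} {x // x ∈ HC} ℚ)
    (hLG : ∀ x y, LG x y = if ((x : Finset (Fin 8)) ∩ (y : Finset (Fin 8))).Nonempty then 1 else 0)
    (hLH : ∀ x y, LH x y = if ((x : Finset (Fin 8)) ∩ (y : Finset (Fin 8))).Nonempty then 1 else 0)
    (g1 g2 : SimpleGraph (Fin 8)) [DecidableRel g1.Adj] [DecidableRel g2.Adj]
    (hg1 : ∀ u v, g1.Adj u v ↔ ({u, v} : Finset (Fin 8)) ∈ GE)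
    (hg2 : ∀ u v, g2.Adj u v ↔ ({u, v} : Finset (Fin 8)) ∈ HE) :
    LG.charpoly = LH.charpoly ∧
    g1.Connected ∧
    Fintype.card g2.ConnectedComponent = 2 :=
  connection_isospectral_different_b0_general GE HE hGE hHE GC HC hGC hHC LG LH hLG hLH g1 g2 hg1
    hg2
end

section
/- Let G be a finite abstract simplicial complex and L its connection matrix, L(x,y) = 1 if x ∩ y ≠ ∅ else 0. Then L is invertible and its inverse g satisfies the Green star formula g(x,y) = ω(x) ω(y) χ(St(x) ∩ St(y)), where ω(x) = (-1)^dim(x), St(x) = {z ∈ G : x ⊆ z}, and χ(A) = Σ_{z∈A} (-1)^dim(z) for any set A of simplices. -/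
/-!
Let `ω` be the diagonal matrix of signs `(-1)^dim x` and `K` the star incidence matrix,
`K x z = [x ⊆ z]`; the claimed inverse is `g = ω K ω Kᵀ ω`. Two alternating sums over Boolean
lattices drive the proof. For a nonempty simplex `z`, the faces of `z` meeting `x` have signed
count `[z ⊆ x]` (all faces of `z` cancel, and those missing `x` are the faces of `z \ x`), which
gives `L ω K = Kᵀ`. The signed count of an interval `[y, x]` of finite sets vanishes unless
`x = y`, which gives `(Kᵀ ω)² = 1`. Hence `L g = (L ω K) ω Kᵀ ω = (Kᵀ ω)² = 1`.
-/

namespace Finset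

variable {α R : Type*} [DecidableEq α] [Ring R]

theorem sum_powerset_neg_one_pow_card_eq_ite (s : Finset α) :
    ∑ t ∈ s.powerset, (-1 : R) ^ #t = if s = ∅ then 1 else 0 := by
  have := congrArg (Int.cast : ℤ → R) (sum_powerset_neg_one_pow_card (x := s))
  push_cast at this
  simpa [apply_ite (Int.cast : ℤ → R)] using this

theorem sum_Icc_neg_one_pow_card (s t : Finset α) :
    ∑ u ∈ Icc s t, (-1 : R) ^ #u = if s = t then (-1) ^ #s else 0 := by
  by_cases h : s ⊆ t
  swap
  · rw [Icc_eq_empty h, sum_empty, if_neg (fun hst => h hst.subset)]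
  have hdisj : ∀ u ∈ (t \ s).powerset, Disjoint s u := fun u hu =>
    disjoint_sdiff.mono_right (mem_powerset.1 hu)
  have hinj : Set.InjOn (s ∪ ·) (t \ s).powerset := fun u hu v hv huv => by
    simpa only [union_sdiff_cancel_left (hdisj u hu), union_sdiff_cancel_left (hdisj v hv)]
      using congrArg (· \ s) huv
  rw [Icc_eq_image_powerset h, sum_image hinj,
    sum_congr rfl fun u hu => by rw [card_union_of_disjoint (hdisj u hu), pow_add],
    ← mul_sum, sum_powerset_neg_one_pow_card_eq_ite]
  have hst : s = t ↔ t \ s = ∅ := by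
    rw [sdiff_eq_empty_iff_subset, Subset.antisymm_iff, and_iff_right h]
  simp only [hst, mul_ite, mul_one, mul_zero]

theorem sum_powerset_filter_inter_nonempty_neg_one_pow_card (s : Finset α) {t : Finset α}
    (ht : t.Nonempty) :
    ∑ u ∈ t.powerset with (s ∩ u).Nonempty, (-1 : R) ^ #u = -if t ⊆ s then 1 else 0 := by
  have hcompl : {u ∈ t.powerset | ¬(s ∩ u).Nonempty} = (t \ s).powerset := by
    ext u
    simp only [mem_filter, mem_powerset, not_nonempty_iff_eq_empty,
      ← disjoint_iff_inter_eq_empty, subset_sdiff]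
    tauto
  have hsplit := sum_filter_add_sum_filter_not t.powerset (fun u => (s ∩ u).Nonempty)
    (fun u => (-1 : R) ^ #u)
  simp only [hcompl, sum_powerset_neg_one_pow_card_eq_ite, if_neg ht.ne_empty,
    sdiff_eq_empty_iff_subset] at hsplit
  exact eq_neg_of_add_eq_zero_left hsplit

end Finset

namespace SimplicialComplex

open Finset Matrix

variable {V : Type*} [DecidableEq V] (G : Finset (Finset V)) (R : Type*) [CommRing R]

def connectionMatrix : Matrix G G R :=
  of fun x y => if ((x : Finset V) ∩ y).Nonempty then 1 else 0

def signMatrix : Matrix G G R :=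
  diagonal fun x => (-1) ^ ((x : Finset V).card + 1)

def starMatrix : Matrix G G R :=
  of fun x z => if (x : Finset V) ⊆ z then 1 else 0

def greenMatrix : Matrix G G R :=
  signMatrix G R * starMatrix G R * signMatrix G R * (starMatrix G R)ᵀ * signMatrix G R

variable {G R}

theorem connectionMatrix_mul_signMatrix_mul_starMatrix (hne : ∀ x ∈ G, x.Nonempty)
    (hclosed : ∀ x ∈ G, ∀ y ⊆ x, y.Nonempty → y ∈ G) :
    connectionMatrix G R * signMatrix G R * starMatrix G R = (starMatrix G R)ᵀ := by
  ext x z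
  have hfaces : {u ∈ G | ((x : Finset V) ∩ u).Nonempty ∧ u ⊆ z} =
      {u ∈ (z : Finset V).powerset | ((x : Finset V) ∩ u).Nonempty} := by
    ext u
    simp only [mem_filter, mem_powerset]
    exact ⟨fun ⟨_, hxu, huz⟩ => ⟨huz, hxu⟩, fun ⟨huz, hxu⟩ =>
      ⟨hclosed z z.2 u huz (hxu.mono inter_subset_right), hxu, huz⟩⟩
  calc (connectionMatrix G R * signMatrix G R * starMatrix G R) x z
      = ∑ u ∈ G, if ((x : Finset V) ∩ u).Nonempty ∧ u ⊆ z then -(-1 : R) ^ #u else 0 := by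
        rw [mul_apply, ← sum_coe_sort G]
        refine Fintype.sum_congr _ _ fun u => ?_
        simp only [connectionMatrix, signMatrix, starMatrix, mul_diagonal, of_apply]
        split_ifs <;> simp_all [pow_succ]
    _ = -∑ u ∈ (z : Finset V).powerset with ((x : Finset V) ∩ u).Nonempty, (-1 : R) ^ #u := by
        rw [← sum_filter, hfaces, sum_neg_distrib]
    _ = (starMatrix G R)ᵀ x z := by
        rw [sum_powerset_filter_inter_nonempty_neg_one_pow_card _ (hne z z.2), neg_neg]
        rfl

theorem starMatrix_transpose_mul_signMatrix_mul_self (hne : ∀ x ∈ G, x.Nonempty)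
    (hclosed : ∀ x ∈ G, ∀ y ⊆ x, y.Nonempty → y ∈ G) :
    (starMatrix G R)ᵀ * signMatrix G R * ((starMatrix G R)ᵀ * signMatrix G R) = 1 := by
  ext x y
  have hinterval : {z ∈ G | (y : Finset V) ⊆ z ∧ z ⊆ x} = Icc (y : Finset V) x := by
    ext z
    simp only [mem_filter, mem_Icc, and_iff_right_iff_imp]
    exact fun ⟨hyz, hzx⟩ => hclosed x x.2 z hzx ((hne y y.2).mono hyz)
  calc ((starMatrix G R)ᵀ * signMatrix G R * ((starMatrix G R)ᵀ * signMatrix G R)) x y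
      = -(-1) ^ ((y : Finset V).card + 1) *
          ∑ z ∈ G with (y : Finset V) ⊆ z ∧ z ⊆ x, (-1 : R) ^ #z := by
        rw [mul_apply, sum_filter, mul_sum, ← sum_coe_sort G]
        refine Fintype.sum_congr _ _ fun z => ?_
        simp only [starMatrix, signMatrix, mul_diagonal, transpose_apply, of_apply]
        split_ifs <;> simp_all [pow_succ, mul_comm]
    _ = (1 : Matrix G G R) x y := by
        rw [hinterval, sum_Icc_neg_one_pow_card, one_apply]
        by_cases hxy : x = y
        · simp [hxy, pow_succ, ← mul_pow]
        · rw [if_neg fun h => hxy (Subtype.ext h.symm), if_neg hxy, mul_zero]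

theorem connectionMatrix_mul_greenMatrix (hne : ∀ x ∈ G, x.Nonempty)
    (hclosed : ∀ x ∈ G, ∀ y ⊆ x, y.Nonempty → y ∈ G) :
    connectionMatrix G R * greenMatrix G R = 1 :=
  calc connectionMatrix G R * greenMatrix G R
      = connectionMatrix G R * signMatrix G R * starMatrix G R *
          (signMatrix G R * ((starMatrix G R)ᵀ * signMatrix G R)) := by
        simp only [greenMatrix, Matrix.mul_assoc]
    _ = (starMatrix G R)ᵀ * signMatrix G R * ((starMatrix G R)ᵀ * signMatrix G R) := by
        rw [connectionMatrix_mul_signMatrix_mul_starMatrix hne hclosed, Matrix.mul_assoc]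
    _ = 1 := starMatrix_transpose_mul_signMatrix_mul_self hne hclosed

theorem greenMatrix_apply (x y : G) :
    greenMatrix G R x y =
      (-1 : R) ^ ((x : Finset V).card + 1) * (-1) ^ ((y : Finset V).card + 1) *
      ∑ z ∈ G with (x : Finset V) ⊆ z ∧ (y : Finset V) ⊆ z, (-1 : R) ^ (z.card + 1) := by
  simp only [greenMatrix, signMatrix]
  rw [mul_diagonal, mul_apply, sum_mul, sum_filter, mul_sum, ← sum_coe_sort G]
  refine Fintype.sum_congr _ _ fun z => ?_
  simp only [starMatrix, mul_diagonal, diagonal_mul, transpose_apply, of_apply, ite_and]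
  split_ifs <;> ring

end SimplicialComplex

/-- Green star formula: for a finite abstract simplicial complex `G` with
connection matrix `L` (`L x y = 1` iff `x ∩ y ≠ ∅`), `L` is invertible and
`L⁻¹ x y = ω(x) ω(y) χ(St(x) ∩ St(y))` where `ω(x) = (-1)^dim(x)`,
`St(x) = {z ∈ G : x ⊆ z}` and `χ(A) = Σ_{z ∈ A} ω(z)`. -/
theorem green_star_formula {V : Type*} [DecidableEq V]
    (G : Finset (Finset V))
    (hne : ∀ x ∈ G, x.Nonempty)
    (hclosed : ∀ x ∈ G, ∀ y ⊆ x, y.Nonempty → y ∈ G)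
    (L : Matrix {x // x ∈ G} {x // x ∈ G} ℚ)
    (hL : ∀ x y, L x y = if ((x : Finset V) ∩ (y : Finset V)).Nonempty then 1 else 0) :
    IsUnit L.det ∧
    ∀ x y : {x // x ∈ G},
      L⁻¹ x y = (-1 : ℚ) ^ ((x : Finset V).card + 1) * (-1) ^ ((y : Finset V).card + 1) *
        ∑ z ∈ G.filter (fun z => (x : Finset V) ⊆ z ∧ (y : Finset V) ⊆ z),
          (-1 : ℚ) ^ (z.card + 1) := by
  obtain rfl : L = SimplicialComplex.connectionMatrix G ℚ := Matrix.ext hL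
  have hinv := SimplicialComplex.connectionMatrix_mul_greenMatrix (R := ℚ) hne hclosed
  exact ⟨Matrix.isUnit_det_of_right_inverse hinv, fun x y => by
    rw [Matrix.inv_eq_right_inv hinv, SimplicialComplex.greenMatrix_apply]⟩
end

section
/- For a finite abstract simplicial complex G, the connection matrix entries satisfy L(x,y) = χ(W^-(x) ∩ W^-(y)), where W^-(x) = {z ∈ G : z ⊆ x} is the set of subsimplices of x; that is, χ({z ∈ G : z ⊆ x and z ⊆ y}) equals 1 if x ∩ y ≠ ∅ and 0 if x ∩ y = ∅. -/
/-- For simplices `x, y` of a finite abstract simplicial complex `G`, the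
connection matrix entry is `χ(W⁻(x) ∩ W⁻(y))`: the Euler characteristic of
`{z ∈ G : z ⊆ x and z ⊆ y}` equals `1` if `x ∩ y ≠ ∅` and `0` otherwise. -/
theorem connection_entry_chi {V : Type*} [DecidableEq V]
    (G : Finset (Finset V))
    (hne : ∀ x ∈ G, x.Nonempty)
    (hclosed : ∀ x ∈ G, ∀ y ⊆ x, y.Nonempty → y ∈ G) :
    ∀ x ∈ G, ∀ y ∈ G,
      ∑ z ∈ G.filter (fun z => z ⊆ x ∧ z ⊆ y), (-1 : ℚ) ^ (z.card + 1) =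
        if (x ∩ y).Nonempty then 1 else 0 := by
  intro x hx y hy
  have hset : G.filter (fun z => z ⊆ x ∧ z ⊆ y)
      = (x ∩ y).powerset.filter (fun z => z.Nonempty) := by
    ext z
    simp only [Finset.mem_filter, Finset.mem_powerset, Finset.subset_inter_iff]
    constructor
    · rintro ⟨hz, h1, h2⟩
      exact ⟨⟨h1, h2⟩, hne z hz⟩
    · rintro ⟨⟨h1, h2⟩, hzne⟩
      exact ⟨hclosed x hx z h1 hzne, h1, h2⟩
  rw [hset]
  have key : ∑ z ∈ (x ∩ y).powerset, (-1 : ℚ) ^ z.card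
      = if (x ∩ y) = ∅ then 1 else 0 := by
    have := Finset.sum_powerset_neg_one_pow_card (x := x ∩ y)
    have : ((∑ m ∈ (x ∩ y).powerset, (-1 : ℤ) ^ m.card : ℤ) : ℚ)
        = ((if (x ∩ y) = ∅ then 1 else 0 : ℤ) : ℚ) := by rw [this]
    push_cast at this
    simpa using this
  have hsplit : (x ∩ y).powerset = insert (∅ : Finset V)
      ((x ∩ y).powerset.filter (fun z => z.Nonempty)) := by
    ext z
    simp only [Finset.mem_insert, Finset.mem_filter, Finset.mem_powerset,
      Finset.nonempty_iff_ne_empty]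
    by_cases h : z = ∅ <;> simp [h]
  have hnotmem : (∅ : Finset V) ∉ (x ∩ y).powerset.filter (fun z => z.Nonempty) := by
    simp
  rw [hsplit, Finset.sum_insert hnotmem] at key
  simp only [Finset.card_empty, pow_zero] at key
  have : ∑ z ∈ (x ∩ y).powerset.filter (fun z => z.Nonempty), (-1 : ℚ) ^ (z.card + 1)
      = -∑ z ∈ (x ∩ y).powerset.filter (fun z => z.Nonempty), (-1 : ℚ) ^ z.card := by
    rw [← Finset.sum_neg_distrib]
    exact Finset.sum_congr rfl fun z _ => by ring
  rw [this]
  by_cases h : (x ∩ y) = ∅ <;>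
    simp [h, Finset.nonempty_iff_ne_empty] at key ⊢ <;> linarith
end

section
/- For a one-dimensional simplicial complex which is a Barycentric refinement of a graph, the connection matrix L satisfies (L - L^{-1})^2 + 2 = L^2 + L^{-2}, and the matrix L - L^{-1} has only nonnegative eigenvalues. -/
/-!
Order the vertices of the refinement as the simplices of `K` followed by the edges `E` of the
graph `Γ` of proper inclusions, and let `B` be the vertex–edge incidence matrix of `Γ`. Two simplices
meet iff they are equal, a simplex meets an edge iff it is one of its ends, and two distinct edges
of a simple graph share at most one end, so `L = [[1, B], [Bᵀ, BᵀB - 1]]`. Its inverse is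
`[[1 - BBᵀ, B], [Bᵀ, -1]]`, whence `L - L⁻¹ = [[BBᵀ, 0], [0, BᵀB]] = D²` for the symmetric matrix
`D = [[0, B], [Bᵀ, 0]]`, a discrete Dirac operator; `L - L⁻¹` is therefore positive semidefinite.
-/

open Matrix Finset

theorem sub_sq_add_two_nsmul_one_of_mul_eq_one {R : Type*} [Ring R] {a b : R}
    (hab : a * b = 1) (hba : b * a = 1) : (a - b) ^ 2 + 2 • 1 = a ^ 2 + b ^ 2 := by
  simp only [sq, sub_mul, mul_sub, hab, hba]
  abel

theorem Finset.card_inter_le_one_of_card_eq_two {α : Type*} [DecidableEq α] {s t : Finset α}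
    (hs : #s = 2) (ht : #t = 2) (hst : s ≠ t) : #(s ∩ t) ≤ 1 := by
  by_contra! h
  have hs' : s ∩ t = s := eq_of_subset_of_card_le inter_subset_left (by omega)
  have ht' : s ∩ t = t := eq_of_subset_of_card_le inter_subset_right (by omega)
  exact hst (hs'.symm.trans ht')

namespace Matrix

variable {W E : Type*} [Fintype W] [DecidableEq W]

def incidence (R : Type*) [Zero R] [One R] (σ : E → Finset W) : Matrix W E R :=
  of fun v e => if v ∈ σ e then 1 else 0

def connection (R : Type*) {ι : Type*} [Zero R] [One R] (ends : ι → Finset W) : Matrix ι ι R :=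
  of fun i j => if (ends i ∩ ends j).Nonempty then 1 else 0

theorem incidence_transpose_mul_self {R : Type*} [NonAssocSemiring R] (σ : E → Finset W) :
    (incidence R σ)ᵀ * incidence R σ = of fun e f => (#(σ e ∩ σ f) : R) := by
  ext e f
  simp only [incidence, mul_apply, transpose_apply, of_apply, mul_ite, mul_one, mul_zero,
    ← ite_and, ← mem_inter, sum_boole, filter_mem_eq_inter, univ_inter, inter_comm]

/-- The connection matrix of the Barycentric refinement of a graph whose edges `e` have the
two-element vertex sets `σ e`. -/
theorem connection_sum_elim_singleton {R : Type*} [DecidableEq E] [NonAssocRing R] (σ : E → Finset W)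
    (hσ : ∀ e, #(σ e) = 2) (hσ_inj : Function.Injective σ) :
    connection R (Sum.elim singleton σ) =
      fromBlocks 1 (incidence R σ) (incidence R σ)ᵀ ((incidence R σ)ᵀ * incidence R σ - 1) := by
  ext (x | e) (y | f)
  · simp [connection, one_apply, ← coe_nonempty, eq_comm]
  · simp [connection, incidence, ← coe_nonempty]
  · simp [connection, incidence, ← coe_nonempty]
  · rw [fromBlocks_apply₂₂, sub_apply, incidence_transpose_mul_self, of_apply, one_apply]
    simp only [connection, of_apply, Sum.elim_inr]
    rcases eq_or_ne e f with rfl | hef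
    · simp only [if_pos, inter_self, hσ, ← card_pos, Nat.ofNat_pos, Nat.cast_ofNat]
      exact (sub_eq_of_eq_add one_add_one_eq_two.symm).symm
    · have hle := card_inter_le_one_of_card_eq_two (hσ e) (hσ f) (hσ_inj.ne hef)
      rcases Nat.le_one_iff_eq_zero_or_eq_one.mp hle with h0 | h1
      · simp [hef, card_eq_zero.mp h0]
      · simp [hef, h1, ← card_pos]

variable {m n R : Type*} [Fintype m] [Fintype n]

theorem posSemidef_fromBlocks_zero_mul_self [CommRing R] [StarRing R] [PartialOrder R]
    [StarOrderedRing R] (B : Matrix m n R) :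
    (fromBlocks 0 B Bᴴ 0 * fromBlocks 0 B Bᴴ 0).PosSemidef := by
  simpa [fromBlocks_conjTranspose] using posSemidef_conjTranspose_mul_self (fromBlocks 0 B Bᴴ 0)

variable [DecidableEq m] [DecidableEq n]

theorem fromBlocks_one_mul_sub_one_mul [Ring R] (B : Matrix m n R) (C : Matrix n m R) :
    fromBlocks 1 B C (C * B - 1) * fromBlocks (1 - B * C) B C (-1) = 1 := by
  rw [fromBlocks_multiply, ← fromBlocks_one]
  congr 1 <;> simp only [Matrix.one_mul, Matrix.mul_one, Matrix.mul_neg, Matrix.mul_sub,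
    Matrix.sub_mul, Matrix.mul_assoc] <;> abel

theorem inv_fromBlocks_one_mul_sub_one [CommRing R] (B : Matrix m n R) (C : Matrix n m R) :
    (fromBlocks 1 B C (C * B - 1))⁻¹ = fromBlocks (1 - B * C) B C (-1) :=
  inv_eq_right_inv (fromBlocks_one_mul_sub_one_mul B C)

theorem fromBlocks_one_mul_sub_one_sub_inv [CommRing R] (B : Matrix m n R) (C : Matrix n m R) :
    fromBlocks 1 B C (C * B - 1) - (fromBlocks 1 B C (C * B - 1))⁻¹ =
      fromBlocks 0 B C 0 * fromBlocks 0 B C 0 := by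
  rw [inv_fromBlocks_one_mul_sub_one, sub_eq_add_neg, fromBlocks_neg, fromBlocks_add,
    fromBlocks_multiply]
  congr 1 <;> simp

end Matrix

theorem hydrogen_identity_general {V : Type*} [DecidableEq V]
    (K : Finset (Finset V))
    (Γ : SimpleGraph {x // x ∈ K})
    (E : Type*) [Fintype E] [DecidableEq E]
    (t h : E → {x // x ∈ K})
    (hth : ∀ e, Γ.Adj (t e) (h e))
    (hbij : ∀ u v, Γ.Adj u v → ∃! e, s(t e, h e) = s(u, v))
    (ends : ({x // x ∈ K} ⊕ E) → Finset {x // x ∈ K})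
    (hends : ∀ z, ends z = Sum.elim (fun x => ({x} : Finset {x // x ∈ K}))
      (fun e => {t e, h e}) z)
    (L : Matrix ({x // x ∈ K} ⊕ E) ({x // x ∈ K} ⊕ E) ℝ)
    (hL : ∀ z w, L z w = if (ends z ∩ ends w).Nonempty then 1 else 0) :
    (L - L⁻¹) ^ 2 + 2 • (1 : Matrix ({x // x ∈ K} ⊕ E) ({x // x ∈ K} ⊕ E) ℝ) =
      L ^ 2 + (L⁻¹) ^ 2 ∧
    (L - L⁻¹).PosSemidef := by
  set σ : E → Finset {x // x ∈ K} := fun e => {t e, h e}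
  have hσ : ∀ e, #(σ e) = 2 := fun e => card_pair (hth e).ne
  have hσ_inj : Function.Injective σ := fun e f hef => by
    obtain ⟨g, -, hg⟩ := hbij _ _ (hth f)
    refine (hg e (Sym2.ext fun x => ?_)).trans (hg f rfl).symm
    rw [← Sym2.mem_toFinset, ← Sym2.mem_toFinset, Sym2.toFinset_mk_eq, Sym2.toFinset_mk_eq]
    exact iff_of_eq (congrArg (x ∈ ·) hef)
  set B : Matrix {x // x ∈ K} E ℝ := incidence ℝ σ
  have hLB : L = fromBlocks 1 B Bᵀ (Bᵀ * B - 1) := by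
    calc L = connection ℝ (Sum.elim singleton σ) := ext fun z w => by rw [hL, hends, hends]; rfl
      _ = _ := connection_sum_elim_singleton σ hσ hσ_inj
  have hLL : L * L⁻¹ = 1 := by
    rw [hLB, inv_fromBlocks_one_mul_sub_one, fromBlocks_one_mul_sub_one_mul]
  refine ⟨sub_sq_add_two_nsmul_one_of_mul_eq_one hLL (mul_eq_one_comm.mp hLL), ?_⟩
  rw [hLB, fromBlocks_one_mul_sub_one_sub_inv, ← conjTranspose_eq_transpose_of_trivial]
  exact posSemidef_fromBlocks_zero_mul_self B

/-- For the connection matrix `L` of a one-dimensional simplicial complex which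
is a Barycentric refinement of a graph, `(L - L⁻¹)² + 2·1 = L² + L⁻²`, and the
matrix `L - L⁻¹` has only nonnegative eigenvalues (it is positive
semidefinite). -/
theorem hydrogen_identity {V : Type*} [Fintype V] [DecidableEq V]
    (K : Finset (Finset V))
    (hK1 : ∀ x ∈ K, x.card = 1 ∨ x.card = 2)
    (hKc : ∀ x ∈ K, ∀ y ⊆ x, y.Nonempty → y ∈ K)
    (Γ : SimpleGraph {x // x ∈ K}) [DecidableRel Γ.Adj]
    (hΓ : ∀ x y, Γ.Adj x y ↔ ((x : Finset V) ⊂ (y : Finset V) ∨ (y : Finset V) ⊂ (x : Finset V)))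
    (E : Type*) [Fintype E] [DecidableEq E]
    (t h : E → {x // x ∈ K})
    (hth : ∀ e, Γ.Adj (t e) (h e))
    (hbij : ∀ u v, Γ.Adj u v → ∃! e, s(t e, h e) = s(u, v))
    (ends : ({x // x ∈ K} ⊕ E) → Finset {x // x ∈ K})
    (hends : ∀ z, ends z = Sum.elim (fun x => ({x} : Finset {x // x ∈ K}))
      (fun e => {t e, h e}) z)
    (L : Matrix ({x // x ∈ K} ⊕ E) ({x // x ∈ K} ⊕ E) ℝ)
    (hL : ∀ z w, L z w = if (ends z ∩ ends w).Nonempty then 1 else 0) :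
    (L - L⁻¹) ^ 2 + 2 • (1 : Matrix ({x // x ∈ K} ⊕ E) ({x // x ∈ K} ⊕ E) ℝ) =
      L ^ 2 + (L⁻¹) ^ 2 ∧
    (L - L⁻¹).PosSemidef :=
  hydrogen_identity_general K Γ E t h hth hbij ends hends L hL
end

section
/- Let Γ be a connected graph that is a Barycentric refinement of a one-dimensional complex with at least one edge. Then the largest eigenvalue of the Kirchhoff Laplacian H0 of Γ has multiplicity 1. -/
/-!
Incidence only relates vertices of `G` to edges of `G`, so `Γ` is bipartite, and conjugating its
Laplacian `D - A` by the diagonal `±1` matrix of the bipartition gives the signless Laplacian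
`D + A`: a symmetric nonnegative matrix that is positive along the edges of the connected graph
`Γ`. For such a matrix the symmetric form of Perron–Frobenius holds. If `f` is an eigenvector
for the top eigenvalue `μ`, then `|f|` has Rayleigh quotient at least that of `f`, hence is a
`μ`-eigenvector too; a nonnegative eigenvector vanishing at a vertex vanishes at its neighbours,
hence everywhere. So top eigenvectors have no zero entry, and any two of them are proportional.
-/

open Matrix
open scoped MatrixOrder

namespace Module.End

variable {K M N : Type*} [Field K] [AddCommGroup M] [Module K M] [AddCommGroup N] [Module K N]

def HasSimpleTopEigenvalue [LinearOrder K] (f : Module.End K M) : Prop :=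
  ∃ μ : K, f.HasEigenvalue μ ∧ (∀ ν, f.HasEigenvalue ν → ν ≤ μ) ∧
    Module.finrank K (f.eigenspace μ) = 1

theorem eigenspace_conj (e : M ≃ₗ[K] N) (f : Module.End K M) (μ : K) :
    (e.conj f).eigenspace μ = (f.eigenspace μ).map (e : M →ₗ[K] N) := by
  ext x
  rw [Submodule.mem_map_equiv, mem_eigenspace_iff, mem_eigenspace_iff,
    LinearEquiv.conj_apply_apply, ← map_smul, LinearEquiv.eq_symm_apply]

theorem hasEigenvalue_conj_iff {e : M ≃ₗ[K] N} {f : Module.End K M} {μ : K} :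
    (e.conj f).HasEigenvalue μ ↔ f.HasEigenvalue μ := by
  simp only [hasEigenvalue_iff, eigenspace_conj, ne_eq, Submodule.map_eq_bot_iff]

theorem HasSimpleTopEigenvalue.conj [LinearOrder K] {f : Module.End K M}
    (hf : f.HasSimpleTopEigenvalue) (e : M ≃ₗ[K] N) : (e.conj f).HasSimpleTopEigenvalue := by
  obtain ⟨μ, hμ, hmax, hrank⟩ := hf
  refine ⟨μ, hasEigenvalue_conj_iff.2 hμ, fun ν hν => hmax ν (hasEigenvalue_conj_iff.1 hν), ?_⟩
  rw [eigenspace_conj, LinearEquiv.finrank_map_eq, hrank]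

end Module.End

theorem SimpleGraph.Reachable.imp_of_forall_adj {V : Type*} {G : SimpleGraph V} {p : V → Prop}
    (hp : ∀ u v, G.Adj u v → p u → p v) {u v : V} (h : G.Reachable u v) : p u → p v := by
  obtain ⟨w⟩ := h
  induction w with
  | nil => exact id
  | cons hadj _ ih => exact ih ∘ hp _ _ hadj

namespace Matrix

variable {n : Type*} [Fintype n] {Q : Matrix n n ℝ} {μ : ℝ}

theorem IsHermitian.posSemidef_smul_one_sub [DecidableEq n] (hQ : Q.IsHermitian)
    (hμ : ∀ ν ∈ spectrum ℝ Q, ν ≤ μ) : (μ • 1 - Q).PosSemidef := by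
  simpa only [Matrix.le_iff, Algebra.algebraMap_eq_smul_one] using
    le_algebraMap_of_spectrum_le hμ (ha := hQ.isSelfAdjoint)

section

variable [DecidableEq n] (hμ : (μ • 1 - Q).PosSemidef)
include hμ

theorem PosSemidef.dotProduct_mulVec_le (x : n → ℝ) : x ⬝ᵥ Q *ᵥ x ≤ μ * (x ⬝ᵥ x) := by
  have := hμ.dotProduct_mulVec_nonneg x
  simp only [star_trivial, sub_mulVec, dotProduct_sub, smul_mulVec, one_mulVec,
    dotProduct_smul, smul_eq_mul] at this
  linarith

theorem PosSemidef.mulVec_eq_smul_of_dotProduct_mulVec_eq {x : n → ℝ}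
    (hx : x ⬝ᵥ Q *ᵥ x = μ * (x ⬝ᵥ x)) : Q *ᵥ x = μ • x := by
  have h := (hμ.dotProduct_mulVec_zero_iff x).1 <| by
    simp only [star_trivial, sub_mulVec, dotProduct_sub, smul_mulVec, one_mulVec,
      dotProduct_smul, smul_eq_mul, hx, sub_self]
  rw [sub_mulVec, sub_eq_zero, smul_mulVec, one_mulVec] at h
  exact h.symm

end

theorem dotProduct_mulVec_le_abs (hQ : ∀ u v, 0 ≤ Q u v) (x : n → ℝ) :
    x ⬝ᵥ Q *ᵥ x ≤ |x| ⬝ᵥ Q *ᵥ |x| := by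
  simp only [dotProduct, mulVec, Finset.mul_sum, Pi.abs_apply]
  refine Finset.sum_le_sum fun u _ => Finset.sum_le_sum fun v _ => ?_
  calc x u * (Q u v * x v) ≤ |x u * (Q u v * x v)| := le_abs_self _
    _ = |x u| * (Q u v * |x v|) := by rw [abs_mul, abs_mul, abs_of_nonneg (hQ u v)]

theorem PosSemidef.mulVec_abs_eq_smul [DecidableEq n] (hμ : (μ • 1 - Q).PosSemidef)
    (hQ : ∀ u v, 0 ≤ Q u v) {x : n → ℝ} (hx : Q *ᵥ x = μ • x) : Q *ᵥ |x| = μ • |x| := by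
  refine hμ.mulVec_eq_smul_of_dotProduct_mulVec_eq (le_antisymm (hμ.dotProduct_mulVec_le _) ?_)
  have habs : |x| ⬝ᵥ |x| = x ⬝ᵥ x := by simp [dotProduct, abs_mul_abs_self]
  calc μ * (|x| ⬝ᵥ |x|) = x ⬝ᵥ Q *ᵥ x := by rw [habs, hx, dotProduct_smul, smul_eq_mul]
    _ ≤ |x| ⬝ᵥ Q *ᵥ |x| := dotProduct_mulVec_le_abs hQ x

section Connected

variable {G : SimpleGraph n} (hG : G.Connected) (hQ : ∀ u v, 0 ≤ Q u v)
  (hQG : ∀ u v, G.Adj u v → 0 < Q u v)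
include hG hQ hQG

theorem eq_zero_of_nonneg_of_mulVec_eq_smul {x : n → ℝ} (hx0 : 0 ≤ x) (hx : Q *ᵥ x = μ • x)
    {u : n} (hu : x u = 0) : x = 0 := by
  have hadj : ∀ a b, G.Adj a b → x a = 0 → x b = 0 := fun a b hab ha => by
    have hsum : ∑ v, Q a v * x v = 0 := by
      simpa [ha, mulVec, dotProduct] using congrFun hx a
    have := (Finset.sum_eq_zero_iff_of_nonneg fun v _ => mul_nonneg (hQ a v) (hx0 v)).1 hsum b
      (Finset.mem_univ b)
    exact (mul_eq_zero.1 this).resolve_left (hQG a b hab).ne'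
  exact funext fun v => (hG u v).imp_of_forall_adj hadj hu

variable [DecidableEq n] (hμ : (μ • 1 - Q).PosSemidef)
include hμ

theorem PosSemidef.eq_zero_of_mulVec_eq_smul {x : n → ℝ} (hx : Q *ᵥ x = μ • x) {u : n}
    (hu : x u = 0) : x = 0 := by
  have : |x| = 0 := eq_zero_of_nonneg_of_mulVec_eq_smul hG hQ hQG (abs_nonneg x)
    (hμ.mulVec_abs_eq_smul hQ hx) (u := u) (by simp [hu])
  exact funext fun v => abs_eq_zero.1 (congrFun this v)

theorem PosSemidef.exists_smul_eq_of_mulVec_eq_smul {x y : n → ℝ} (hx : Q *ᵥ x = μ • x)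
    (hx0 : x ≠ 0) (hy : Q *ᵥ y = μ • y) : ∃ c : ℝ, c • x = y := by
  obtain ⟨u⟩ := hG.nonempty
  have hxu : x u ≠ 0 := fun h => hx0 (hμ.eq_zero_of_mulVec_eq_smul hG hQ hQG hx h)
  refine ⟨y u / x u, (sub_eq_zero.1 ?_).symm⟩
  refine hμ.eq_zero_of_mulVec_eq_smul hG hQ hQG (u := u) ?_ ?_
  · rw [mulVec_sub, mulVec_smul, hx, hy, smul_sub, smul_comm]
  · simp [div_mul_cancel₀ _ hxu]

end Connected

theorem IsHermitian.hasSimpleTopEigenvalue_of_nonneg [DecidableEq n] (hQs : Q.IsHermitian)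
    {G : SimpleGraph n} (hG : G.Connected) (hQ : ∀ u v, 0 ≤ Q u v)
    (hQG : ∀ u v, G.Adj u v → 0 < Q u v) : Module.End.HasSimpleTopEigenvalue (toLin' Q) := by
  have hspec : ∀ ν, Module.End.HasEigenvalue (toLin' Q) ν ↔ ν ∈ spectrum ℝ Q := fun ν => by
    rw [Module.End.hasEigenvalue_iff_mem_spectrum, spectrum_toLin']
  have := hG.nonempty
  obtain ⟨i, -, hi⟩ := Finset.exists_max_image Finset.univ hQs.eigenvalues Finset.univ_nonempty
  have hmax : ∀ ν ∈ spectrum ℝ Q, ν ≤ hQs.eigenvalues i := by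
    rw [hQs.spectrum_real_eq_range_eigenvalues]
    rintro _ ⟨j, rfl⟩
    exact hi j (Finset.mem_univ j)
  have hμ : Module.End.HasEigenvalue (toLin' Q) (hQs.eigenvalues i) :=
    (hspec _).2 (hQs.eigenvalues_mem_spectrum_real i)
  have hPSD := hQs.posSemidef_smul_one_sub hmax
  refine ⟨_, hμ, fun ν hν => hmax ν ((hspec ν).1 hν), ?_⟩
  obtain ⟨x, hxmem, hx0⟩ := hμ.exists_hasEigenvector
  have hmem : ∀ {y}, y ∈ Module.End.eigenspace (toLin' Q) (hQs.eigenvalues i) ↔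
      Q *ᵥ y = hQs.eigenvalues i • y := by
    intro y
    rw [Module.End.mem_eigenspace_iff, toLin'_apply]
  refine (finrank_eq_one_iff_of_nonzero' ⟨x, hxmem⟩ (by simpa using hx0)).2 fun ⟨y, hy⟩ => ?_
  obtain ⟨c, hc⟩ := hPSD.exists_smul_eq_of_mulVec_eq_smul hG hQ hQG (hmem.1 hxmem) hx0 (hmem.1 hy)
  exact ⟨c, Subtype.ext hc⟩

end Matrix

namespace SimpleGraph

variable {V : Type*} {G : SimpleGraph V}

theorem IsBipartite.exists_sign (h : G.IsBipartite) :
    ∃ σ : V → ℝ, (∀ u, σ u * σ u = 1) ∧ ∀ u v, G.Adj u v → σ u * σ v = -1 := by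
  obtain ⟨c⟩ := h
  refine ⟨fun u => (-1) ^ (c u : ℕ), fun u => by simp [← pow_add], fun u v huv => ?_⟩
  have : (c u : ℕ) + c v = 1 := by have := c.valid huv; omega
  rw [← pow_add, this, pow_one]

variable [Fintype V] [DecidableEq V] [DecidableRel G.Adj]

theorem hasSimpleTopEigenvalue_degMatrix_add_adjMatrix (hG : G.Connected) :
    Module.End.HasSimpleTopEigenvalue (toLin' (G.degMatrix ℝ + G.adjMatrix ℝ)) := by
  have hsymm := (isHermitian_degMatrix ℝ G).add (isHermitian_adjMatrix ℝ G)
  refine hsymm.hasSimpleTopEigenvalue_of_nonneg hG (fun u v => add_nonneg ?_ ?_) fun u v h => ?_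
  · simp only [degMatrix, diagonal_apply]; positivity
  · simp only [adjMatrix_apply]; positivity
  · simp [degMatrix, h, h.ne]

theorem lapMatrix_eq_diagonal_mul_mul_diagonal {σ : V → ℝ} (hσ : ∀ u, σ u * σ u = 1)
    (hσG : ∀ u v, G.Adj u v → σ u * σ v = -1) :
    G.lapMatrix ℝ = diagonal σ * (G.degMatrix ℝ + G.adjMatrix ℝ) * diagonal σ := by
  ext u v
  simp only [mul_diagonal, diagonal_mul, lapMatrix, degMatrix, Matrix.sub_apply, Matrix.add_apply,
    diagonal_apply, adjMatrix_apply]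
  split_ifs with huv h h
  · exact absurd h (huv ▸ G.irrefl)
  · subst huv
    linear_combination (-(G.degree u : ℝ)) * hσ u
  · linear_combination -hσG u v h
  · ring

theorem Connected.hasSimpleTopEigenvalue_lapMatrix (hG : G.Connected) (hb : G.IsBipartite) :
    Module.End.HasSimpleTopEigenvalue (toLin' (G.lapMatrix ℝ)) := by
  obtain ⟨σ, hσ, hσG⟩ := hb.exists_sign
  have hD : diagonal σ * diagonal σ = 1 := by
    rw [diagonal_mul_diagonal, ← diagonal_one]
    exact congrArg diagonal (funext hσ)
  convert (hasSimpleTopEigenvalue_degMatrix_add_adjMatrix hG).conj (toLin'OfInv hD hD) using 1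
  rw [lapMatrix_eq_diagonal_mul_mul_diagonal hσ hσG, toLin'_mul, toLin'_mul, LinearEquiv.conj_apply]
  rfl

end SimpleGraph

theorem top_eigenvalue_simple_general {V : Type*} [DecidableEq V]
    (K : Finset (Finset V))
    (hK1 : ∀ x ∈ K, x.card = 1 ∨ x.card = 2)
    (Γ : SimpleGraph {x // x ∈ K}) [DecidableRel Γ.Adj]
    (hΓ : ∀ x y, Γ.Adj x y ↔ ((x : Finset V) ⊂ (y : Finset V) ∨ (y : Finset V) ⊂ (x : Finset V)))
    (hconn : Γ.Connected) :
    ∃ μ : ℝ,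
      Module.End.HasEigenvalue (Matrix.toLin' (Γ.lapMatrix ℝ)) μ ∧
      (∀ ν : ℝ, Module.End.HasEigenvalue (Matrix.toLin' (Γ.lapMatrix ℝ)) ν → ν ≤ μ) ∧
      Module.finrank ℝ (Module.End.eigenspace (Matrix.toLin' (Γ.lapMatrix ℝ)) μ) = 1 := by
  have hsub : ∀ x y : {x // x ∈ K}, (x : Finset V) ⊂ y →
      (x : Finset V).card = 1 ∧ (y : Finset V).card = 2 := fun x y hxy => by
    have := Finset.card_lt_card hxy
    have := hK1 x x.2
    have := hK1 y y.2
    omega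
  let c : Γ.Coloring Bool :=
    SimpleGraph.Coloring.mk (fun x => decide ((x : Finset V).card = 1)) fun {x y} hxy => by
      rcases (hΓ x y).1 hxy with h | h <;> simp [(hsub _ _ h).1, (hsub _ _ h).2]
  exact hconn.hasSimpleTopEigenvalue_lapMatrix (by simpa using c.colorable)

/-- For a connected Barycentric refinement graph `Γ` of a one-dimensional
complex with at least one edge, the largest eigenvalue of the Kirchhoff
Laplacian `H0` of `Γ` has multiplicity `1`. -/
theorem top_eigenvalue_simple {V : Type*} [Fintype V] [DecidableEq V]
    (K : Finset (Finset V))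
    (hK1 : ∀ x ∈ K, x.card = 1 ∨ x.card = 2)
    (hKc : ∀ x ∈ K, ∀ y ⊆ x, y.Nonempty → y ∈ K)
    (hE : ∃ x ∈ K, x.card = 2)
    (Γ : SimpleGraph {x // x ∈ K}) [DecidableRel Γ.Adj]
    (hΓ : ∀ x y, Γ.Adj x y ↔ ((x : Finset V) ⊂ (y : Finset V) ∨ (y : Finset V) ⊂ (x : Finset V)))
    (hconn : Γ.Connected) :
    ∃ μ : ℝ,
      Module.End.HasEigenvalue (Matrix.toLin' (Γ.lapMatrix ℝ)) μ ∧
      (∀ ν : ℝ, Module.End.HasEigenvalue (Matrix.toLin' (Γ.lapMatrix ℝ)) ν → ν ≤ μ) ∧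
      Module.finrank ℝ (Module.End.eigenspace (Matrix.toLin' (Γ.lapMatrix ℝ)) μ) = 1 :=
  top_eigenvalue_simple_general K hK1 Γ hΓ hconn
end

section
/- For a finite abstract simplicial complex G, the sum of all matrix entries of the inverse g of the connection matrix L equals the Euler characteristic: Σ_{x,y} g(x,y) = χ(G). -/
open Finset Matrix

private lemma powsum {V : Type*} [DecidableEq V] (s : Finset V) :
    ∑ z ∈ s.powerset, (-1:ℚ)^z.card = if s = ∅ then 1 else 0 := by
  have h := Finset.sum_powerset_neg_one_pow_card (x := s)
  have h2 := congrArg (fun n : ℤ => (n : ℚ)) h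
  push_cast at h2
  split_ifs at h2 <;> simp_all

private lemma sumNE {V : Type*} [DecidableEq V] (s : Finset V) :
    ∑ z ∈ s.powerset.filter (fun z => z.Nonempty), (-1:ℚ)^z.card
      = (if s = ∅ then 1 else 0) - 1 := by
  have hsplit := Finset.sum_filter_add_sum_filter_not s.powerset
    (fun z => z.Nonempty) (fun z => (-1:ℚ)^z.card)
  have hempty : s.powerset.filter (fun z => ¬ z.Nonempty) = {∅} := by
    ext z
    simp [Finset.mem_filter, Finset.not_nonempty_iff_eq_empty]
    rintro rfl; exact Finset.empty_subset s
  rw [hempty] at hsplit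
  simp only [Finset.sum_singleton, Finset.card_empty, pow_zero] at hsplit
  rw [powsum] at hsplit
  linarith

private lemma powsum_filter {V : Type*} [DecidableEq V] (s t : Finset V) :
    ∑ z ∈ t.powerset.filter (fun z => s ⊆ z), (-1:ℚ)^z.card
      = if s = t then (-1:ℚ)^s.card else 0 := by
  by_cases hst : s ⊆ t
  · have key : ∑ z ∈ t.powerset.filter (fun z => s ⊆ z), (-1:ℚ)^z.card
        = ∑ w ∈ (t \ s).powerset, (-1:ℚ)^(w.card + s.card) := by
      refine Finset.sum_nbij' (fun z => z \ s) (fun w => w ∪ s) ?_ ?_ ?_ ?_ ?_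
      · intro z hz
        simp only [Finset.mem_filter, Finset.mem_powerset] at hz ⊢
        exact Finset.sdiff_subset_sdiff hz.1 (Finset.Subset.refl s)
      · intro w hw
        simp only [Finset.mem_filter, Finset.mem_powerset] at hw ⊢
        exact ⟨Finset.union_subset (hw.trans Finset.sdiff_subset) hst,
          Finset.subset_union_right⟩
      · intro z hz
        simp only [Finset.mem_filter, Finset.mem_powerset] at hz
        exact Finset.sdiff_union_of_subset hz.2
      · intro w hw
        simp only [Finset.mem_powerset] at hw
        exact Finset.union_sdiff_cancel_right (Finset.sdiff_disjoint.mono_left hw)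
      · intro z hz
        simp only [Finset.mem_filter, Finset.mem_powerset] at hz
        congr 1
        rw [Finset.card_sdiff_of_subset hz.2]
        have := Finset.card_le_card hz.2
        omega
    rw [key]
    simp only [pow_add]
    rw [← Finset.sum_mul, powsum]
    have hiff : (t \ s = ∅) ↔ s = t := by
      rw [Finset.sdiff_eq_empty_iff_subset]
      exact ⟨fun h => Finset.Subset.antisymm hst h, fun h => h ▸ Finset.Subset.refl t⟩
    by_cases h : s = t
    · rw [if_pos (hiff.mpr h), if_pos h, one_mul]
    · rw [if_neg (fun c => h (hiff.mp c)), if_neg h, zero_mul]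
  · have hempty : t.powerset.filter (fun z => s ⊆ z) = ∅ := by
      ext z
      simp only [Finset.mem_filter, Finset.mem_powerset, Finset.notMem_empty, iff_false]
      rintro ⟨h1, h2⟩
      exact hst (h2.trans h1)
    rw [hempty]
    have : s ≠ t := fun h => hst (h ▸ Finset.Subset.refl s)
    simp [this]

/-- Energy theorem: for a finite abstract simplicial complex `G` with
(invertible) connection matrix `L`, the sum of all entries of the Green
function `g = L⁻¹` equals the Euler characteristic `χ(G)`. -/
theorem energy_theorem {V : Type*} [DecidableEq V]
    (G : Finset (Finset V))
    (hne : ∀ x ∈ G, x.Nonempty)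
    (hclosed : ∀ x ∈ G, ∀ y ⊆ x, y.Nonempty → y ∈ G)
    (L : Matrix {x // x ∈ G} {x // x ∈ G} ℚ)
    (hL : ∀ x y, L x y = if ((x : Finset V) ∩ (y : Finset V)).Nonempty then 1 else 0) :
    IsUnit L.det ∧
    ∑ x : {x // x ∈ G}, ∑ y : {x // x ∈ G}, L⁻¹ x y =
      ∑ x ∈ G, (-1 : ℚ) ^ (x.card + 1) := by
  classical
  let ω : {x // x ∈ G} → ℚ := fun z => (-1)^(z.1.card + 1)
  let A : Matrix {x // x ∈ G} {x // x ∈ G} ℚ := fun z x => if z.1 ⊆ x.1 then 1 else 0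
  let B : Matrix {x // x ∈ G} {x // x ∈ G} ℚ := fun x y => if x.1 ⊆ y.1 then (-1:ℚ)^(y.1.card + x.1.card) else 0
  let D : Matrix {x // x ∈ G} {x // x ∈ G} ℚ := Matrix.diagonal ω
  -- filter lemmas
  have filterA : ∀ {s x : Finset V}, x ∈ G → s ⊆ x →
      G.filter (fun z => z ⊆ s) = s.powerset.filter (fun z => z.Nonempty) := by
    intro s x hx hs
    ext z
    simp only [Finset.mem_filter, Finset.mem_powerset]
    exact ⟨fun ⟨h1, h2⟩ => ⟨h2, hne z h1⟩,
      fun ⟨h1, h2⟩ => ⟨hclosed x hx z (h1.trans hs) h2, h1⟩⟩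
  have filterB : ∀ {s t : Finset V}, s ∈ G → t ∈ G →
      G.filter (fun z => s ⊆ z ∧ z ⊆ t) = t.powerset.filter (fun z => s ⊆ z) := by
    intro s t hs ht
    ext z
    simp only [Finset.mem_filter, Finset.mem_powerset]
    refine ⟨fun ⟨h1, h2, h3⟩ => ⟨h3, h2⟩, fun ⟨h1, h2⟩ => ⟨?_, h2, h1⟩⟩
    exact hclosed t ht z h1 ((hne s hs).mono h2)
  -- ω squares to 1
  have hωsq : ∀ z : {x // x ∈ G}, ω z * ω z = 1 := by
    intro z
    show (-1:ℚ)^(z.1.card+1) * (-1)^(z.1.card+1) = 1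
    rw [← pow_add]
    exact Even.neg_one_pow ⟨z.1.card + 1, rfl⟩
  -- factorization L = Aᵀ * D * A
  have hfact : L = Aᵀ * D * A := by
    ext x y
    rw [Matrix.mul_assoc, Matrix.mul_apply, hL]
    have hsummand : ∀ z : {x // x ∈ G}, Aᵀ x z * (D * A) z y
        = (fun w : Finset V => if w ⊆ x.1 ∩ y.1 then (-1:ℚ)^(w.card + 1) else 0) z.1 := by
      intro z
      rw [Matrix.transpose_apply, Matrix.diagonal_mul]
      show (if z.1 ⊆ x.1 then (1:ℚ) else 0) * (ω z * if z.1 ⊆ y.1 then 1 else 0) = _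
      by_cases h1 : z.1 ⊆ x.1 <;> by_cases h2 : z.1 ⊆ y.1 <;>
        simp [h1, h2, Finset.subset_inter_iff, ω]
    have hcoe : ∑ z : {x // x ∈ G}, Aᵀ x z * (D * A) z y
        = ∑ z ∈ G, (if z ⊆ x.1 ∩ y.1 then (-1:ℚ)^(z.card + 1) else 0) :=
      (Finset.sum_congr rfl fun z _ => hsummand z).trans
        (Finset.sum_coe_sort G (fun w => if w ⊆ x.1 ∩ y.1 then (-1:ℚ)^(w.card + 1) else 0))
    rw [hcoe, ← Finset.sum_filter, filterA x.2 Finset.inter_subset_left]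
    have : ∑ z ∈ (x.1 ∩ y.1).powerset.filter (fun z => z.Nonempty), (-1:ℚ)^(z.card + 1)
        = -∑ z ∈ (x.1 ∩ y.1).powerset.filter (fun z => z.Nonempty), (-1:ℚ)^z.card := by
      rw [← Finset.sum_neg_distrib]
      exact Finset.sum_congr rfl fun z _ => by rw [pow_succ]; ring
    rw [this, sumNE]
    by_cases h : (x.1 ∩ y.1).Nonempty
    · rw [if_pos h, if_neg (Finset.nonempty_iff_ne_empty.mp h)]; ring
    · rw [if_neg h, if_pos (Finset.not_nonempty_iff_eq_empty.mp h)]; ring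
  -- A * B = 1
  have hAB : A * B = 1 := by
    ext x y
    rw [Matrix.mul_apply, Matrix.one_apply]
    have hsummand : ∀ z : {x // x ∈ G}, A x z * B z y
        = (fun w : Finset V =>
            if x.1 ⊆ w ∧ w ⊆ y.1 then (-1:ℚ)^y.1.card * (-1)^w.card else 0) z.1 := by
      intro z
      show (if x.1 ⊆ z.1 then (1:ℚ) else 0) *
          (if z.1 ⊆ y.1 then (-1:ℚ)^(y.1.card + z.1.card) else 0) = _
      by_cases h1 : x.1 ⊆ z.1 <;> by_cases h2 : z.1 ⊆ y.1 <;>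
        simp [h1, h2, pow_add]
    have hcoe : ∑ z : {x // x ∈ G}, A x z * B z y
        = ∑ z ∈ G, (if x.1 ⊆ z ∧ z ⊆ y.1 then (-1:ℚ)^y.1.card * (-1)^z.card else 0) :=
      (Finset.sum_congr rfl fun z _ => hsummand z).trans
        (Finset.sum_coe_sort G
          (fun w => if x.1 ⊆ w ∧ w ⊆ y.1 then (-1:ℚ)^y.1.card * (-1)^w.card else 0))
    rw [hcoe, ← Finset.sum_filter, filterB x.2 y.2, ← Finset.mul_sum, powsum_filter]
    by_cases h : x.1 = y.1
    · rw [if_pos h, if_pos (Subtype.ext h), h, ← pow_add]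
      exact Even.neg_one_pow ⟨y.1.card, rfl⟩
    · rw [if_neg h, if_neg (fun c => h (congrArg Subtype.val c)), mul_zero]
  have hBA : B * A = 1 := mul_eq_one_comm.mp hAB
  have hDD : D * D = 1 := by
    rw [Matrix.diagonal_mul_diagonal]
    have : (fun z => ω z * ω z) = fun _ => (1:ℚ) := funext hωsq
    rw [this, Matrix.diagonal_one]
  -- L * M = 1
  set M : Matrix {x // x ∈ G} {x // x ∈ G} ℚ := B * D * Bᵀ with hM
  have hLM : L * M = 1 := by
    rw [hfact, hM]
    calc Aᵀ * D * A * (B * D * Bᵀ)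
        = Aᵀ * D * (A * B) * D * Bᵀ := by
          simp only [Matrix.mul_assoc]
      _ = Aᵀ * (D * D) * Bᵀ := by rw [hAB, Matrix.mul_one]; simp only [Matrix.mul_assoc]
      _ = Aᵀ * Bᵀ := by rw [hDD, Matrix.mul_one]
      _ = (B * A)ᵀ := (Matrix.transpose_mul B A).symm
      _ = 1 := by rw [hBA, Matrix.transpose_one]
  have hdet : IsUnit L.det := Matrix.isUnit_det_of_right_inverse hLM
  have hinv : L⁻¹ = M := Matrix.inv_eq_right_inv hLM
  refine ⟨hdet, ?_⟩
  rw [hinv]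
  -- column sums of B
  have colsum : ∀ z : {x // x ∈ G}, ∑ x : {x // x ∈ G}, B x z = ω z := by
    intro z
    have hsummand : ∀ x : {x // x ∈ G}, B x z
        = (fun w : Finset V => if w ⊆ z.1 then (-1:ℚ)^z.1.card * (-1)^w.card else 0) x.1 := by
      intro x
      show (if x.1 ⊆ z.1 then (-1:ℚ)^(z.1.card + x.1.card) else 0) = _
      by_cases h : x.1 ⊆ z.1 <;> simp [h, pow_add]
    have hcoe : ∑ x : {x // x ∈ G}, B x z
        = ∑ w ∈ G, (if w ⊆ z.1 then (-1:ℚ)^z.1.card * (-1)^w.card else 0) :=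
      (Finset.sum_congr rfl fun x _ => hsummand x).trans
        (Finset.sum_coe_sort G (fun w => if w ⊆ z.1 then (-1:ℚ)^z.1.card * (-1)^w.card else 0))
    rw [hcoe, ← Finset.sum_filter, filterA z.2 (Finset.Subset.refl z.1), ← Finset.mul_sum, sumNE]
    rw [if_neg (Finset.nonempty_iff_ne_empty.mp (hne z.1 z.2))]
    show (-1:ℚ)^z.1.card * (0 - 1) = (-1)^(z.1.card + 1)
    rw [pow_succ]; ring
  -- compute the total sum
  have hentry : ∀ x y : {x // x ∈ G}, M x y = ∑ z : {x // x ∈ G}, B x z * (ω z * B y z) := by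
    intro x y
    rw [hM, Matrix.mul_assoc, Matrix.mul_apply]
    exact Finset.sum_congr rfl fun z _ => by
      rw [Matrix.diagonal_mul, Matrix.transpose_apply]
  calc ∑ x : {x // x ∈ G}, ∑ y : {x // x ∈ G}, M x y
      = ∑ x : {x // x ∈ G}, ∑ y : {x // x ∈ G}, ∑ z : {x // x ∈ G}, B x z * (ω z * B y z) := by
        exact Finset.sum_congr rfl fun x _ => Finset.sum_congr rfl fun y _ => hentry x y
    _ = ∑ x : {x // x ∈ G}, ∑ z : {x // x ∈ G}, ∑ y : {x // x ∈ G}, B x z * (ω z * B y z) := by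
        exact Finset.sum_congr rfl fun x _ => Finset.sum_comm
    _ = ∑ z : {x // x ∈ G}, ∑ x : {x // x ∈ G}, ∑ y : {x // x ∈ G}, B x z * (ω z * B y z) :=
        Finset.sum_comm
    _ = ∑ z : {x // x ∈ G}, (∑ x : {x // x ∈ G}, B x z) * (ω z * ∑ y : {x // x ∈ G}, B y z) := by
        refine Finset.sum_congr rfl fun z _ => ?_
        rw [Finset.sum_mul]
        exact Finset.sum_congr rfl fun x _ => by rw [Finset.mul_sum, Finset.mul_sum]
    _ = ∑ z : {x // x ∈ G}, ω z := by
        refine Finset.sum_congr rfl fun z _ => ?_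
        rw [colsum z]
        calc ω z * (ω z * ω z) = ω z * 1 := by rw [hωsq z]
          _ = ω z := mul_one _
    _ = ∑ x ∈ G, (-1:ℚ)^(x.card + 1) :=
        Finset.sum_coe_sort G (fun w => (-1:ℚ)^(w.card + 1))
end
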